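/- arXiv:1301.2235 — 4 statements merged into one kernel-verified Lean document; each statement's English description precedes it below -/
import Mathlib

section
/- Let p ≥ 2 be an integer, j ∈ ℤ, and q := exp(iπ/p) ∈ ℂ. Define the braiding matrix entries q₁₁ := −1, q₁₂ := (−1)^j q⁻¹, q₂₁ := (−1)^j q⁻¹, q₂₂ := q², and the real numbers x₁₁ := 1, x₁₂ := −(jp+1)/p, x₂₂ := 2(jp+1)/p. Then: (i) exp(iπ·x₁₁) = q₁₁, exp(iπ·x₂₂) = q₂₂, and exp(2iπ·x₁₂) = q₁₂·q₂₁; (ii) q₁₂·q₂₁·q₂₂ = 1 and q₁₂·q₂₁ = q⁻² is a primitive p-th root of unity; (iii) with the A₂ Cartan matrix (a₁₁ = a₂₂ = 2, a₁₂ = a₂₁ = −1), the conditions (1 − a₁₂)·x₁₁ = 2 and a₂₁·x₂₂ = 2·x₁₂ hold, so for each pair i ≠ j at least one of the alternatives a_{ij}·x_{ii} = 2·x_{ij} or (1 − a_{ij})·x_{ii} = 2 is satisfied. -/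
/-! With `q = exp(πi/p)` every quantity in sight is a power of `q` up to a factor `exp(2πik)`
with `k ∈ ℤ`: the momenta are `x₂₂ = 2j + 2/p = -2 x₁₂`, so `exp(πi x₂₂) = q²` and
`exp(2πi x₁₂) = q⁻²`, while the signs `(-1)^j` square to `1`, so `q₁₂ q₂₁ = q⁻²`.
Primitivity comes from `q² = exp(2πi/p)`. -/

open Complex

lemma exp_int_mul_add_int_mul_two_pi_I (n k : ℤ) (z : ℂ) :
    exp (n * z + k * (2 * Real.pi * I)) = exp z ^ n := by
  rw [(exp_periodic.int_mul k) (n * z), exp_int_mul]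

lemma neg_one_zpow_mul_inv_mul_self {K : Type*} [Field K] (j : ℤ) (q : K) :
    (-1) ^ j * q⁻¹ * ((-1) ^ j * q⁻¹) = q ^ (-2 : ℤ) := by
  rw [mul_mul_mul_comm, ← mul_zpow]
  simp [zpow_neg, sq]

lemma isPrimitiveRoot_exp_pi_I_div_zpow_neg_two {p : ℕ} (hp : p ≠ 0) :
    IsPrimitiveRoot (exp (Real.pi * I / p) ^ (-2 : ℤ)) p := by
  have hsq : exp (Real.pi * I / p) ^ (2 : ℤ) = exp (2 * Real.pi * I / p) := by
    rw [← exp_int_mul]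
    ring_nf
  rw [zpow_neg, hsq]
  exact (isPrimitiveRoot_exp p hp).inv

/-- the asymmetric momentum data `R_asymm(j)` solves the equations
relating screening momenta to the braiding matrix `Q_asymm`. -/
theorem asymm_momenta_solve_braiding_equations
    (p : ℕ) (hp : 2 ≤ p) (j : ℤ)
    (q : ℂ) (hq : q = Complex.exp ((Real.pi : ℂ) * Complex.I / p))
    (q11 q12 q21 q22 : ℂ)
    (hq11 : q11 = -1)
    (hq12 : q12 = (-1 : ℂ) ^ j * q⁻¹)
    (hq21 : q21 = (-1 : ℂ) ^ j * q⁻¹)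
    (hq22 : q22 = q ^ 2)
    (x11 x12 x22 : ℝ)
    (hx11 : x11 = 1)
    (hx12 : x12 = -(((j * p + 1 : ℤ) : ℝ)) / p)
    (hx22 : x22 = 2 * ((j * p + 1 : ℤ) : ℝ) / p) :
    (Complex.exp ((Real.pi : ℂ) * Complex.I * (x11 : ℂ)) = q11 ∧
     Complex.exp ((Real.pi : ℂ) * Complex.I * (x22 : ℂ)) = q22 ∧
     Complex.exp (2 * (Real.pi : ℂ) * Complex.I * (x12 : ℂ)) = q12 * q21) ∧
    (q12 * q21 * q22 = 1 ∧ q12 * q21 = q ^ (-2 : ℤ) ∧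
     IsPrimitiveRoot (q12 * q21) p) ∧
    ((1 - (-1 : ℝ)) * x11 = 2 ∧ (-1 : ℝ) * x22 = 2 * x12 ∧
     (((-1 : ℝ) * x11 = 2 * x12 ∨ (1 - (-1 : ℝ)) * x11 = 2) ∧
      ((-1 : ℝ) * x22 = 2 * x12 ∨ (1 - (-1 : ℝ)) * x22 = 2))) := by
  subst hq hq11 hq12 hq21 hq22 hx11 hx12 hx22
  have hp0 : (p : ℂ) ≠ 0 := Nat.cast_ne_zero.mpr (by omega)
  have hprod := neg_one_zpow_mul_inv_mul_self j (exp (Real.pi * I / p))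
  have hx22 : Real.pi * I * ((2 * ((j * p + 1 : ℤ) : ℝ) / p : ℝ) : ℂ)
      = (2 : ℤ) * (Real.pi * I / p) + j * (2 * Real.pi * I) := by
    push_cast; field_simp; ring
  have hx12 : 2 * Real.pi * I * ((-(((j * p + 1 : ℤ) : ℝ)) / p : ℝ) : ℂ)
      = (-2 : ℤ) * (Real.pi * I / p) + (-j : ℤ) * (2 * Real.pi * I) := by
    push_cast; field_simp; ring
  refine ⟨⟨by simp, ?_, ?_⟩, ⟨?_, hprod, ?_⟩, by norm_num, ?_, Or.inr (by norm_num), Or.inl ?_⟩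
  · rw [hx22, exp_int_mul_add_int_mul_two_pi_I, zpow_ofNat]
  · rw [hx12, exp_int_mul_add_int_mul_two_pi_I, hprod]
  · rw [hprod, ← zpow_ofNat, ← zpow_add₀ (exp_ne_zero _)]
    norm_num
  · exact hprod ▸ isPrimitiveRoot_exp_pi_I_div_zpow_neg_two (by omega)
  all_goals push_cast; field_simp
end

section
/- Let p ≥ 2 be an integer, j ∈ ℤ, and q := exp(iπ/p) ∈ ℂ. Define the braiding matrix entries q₁₁ := q², q₁₂ := (−1)^j q⁻¹, q₂₁ := (−1)^j q⁻¹, q₂₂ := −1, and the real numbers x₁₁ := 2(jp+1)/p, x₁₂ := −(jp+1)/p, x₂₂ := 1. Then: (i) exp(iπ·x₁₁) = q₁₁, exp(iπ·x₂₂) = q₂₂, and exp(2iπ·x₁₂) = q₁₂·q₂₁; (ii) q₁₂·q₂₁·q₁₁ = 1 and q₁₂·q₂₁ = q⁻² is a primitive p-th root of unity; (iii) with the A₂ Cartan matrix (a₁₁ = a₂₂ = 2, a₁₂ = a₂₁ = −1), the conditions a₁₂·x₁₁ = 2·x₁₂ and (1 − a₂₁)·x₂₂ = 2 hold, so for each pair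 i ≠ j at least one of the alternatives a_{ij}·x_{ii} = 2·x_{ij} or (1 − a_{ij})·x_{ii} = 2 is satisfied. -/
/-- the opposite asymmetric momentum data `R̄_asymm(j)` solves the
equations relating screening momenta to the braiding matrix `Q̄_asymm`. -/
theorem opp_asymm_momenta_solve_braiding_equations
    (p : ℕ) (hp : 2 ≤ p) (j : ℤ)
    (q : ℂ) (hq : q = Complex.exp ((Real.pi : ℂ) * Complex.I / p))
    (q11 q12 q21 q22 : ℂ)
    (hq11 : q11 = q ^ 2)
    (hq12 : q12 = (-1 : ℂ) ^ j * q⁻¹)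
    (hq21 : q21 = (-1 : ℂ) ^ j * q⁻¹)
    (hq22 : q22 = -1)
    (x11 x12 x22 : ℝ)
    (hx11 : x11 = 2 * ((j * p + 1 : ℤ) : ℝ) / p)
    (hx12 : x12 = -(((j * p + 1 : ℤ) : ℝ)) / p)
    (hx22 : x22 = 1) :
    (Complex.exp ((Real.pi : ℂ) * Complex.I * (x11 : ℂ)) = q11 ∧
     Complex.exp ((Real.pi : ℂ) * Complex.I * (x22 : ℂ)) = q22 ∧
     Complex.exp (2 * (Real.pi : ℂ) * Complex.I * (x12 : ℂ)) = q12 * q21) ∧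
    (q12 * q21 * q11 = 1 ∧ q12 * q21 = q ^ (-2 : ℤ) ∧
     IsPrimitiveRoot (q12 * q21) p) ∧
    ((-1 : ℝ) * x11 = 2 * x12 ∧ (1 - (-1 : ℝ)) * x22 = 2 ∧
     (((-1 : ℝ) * x11 = 2 * x12 ∨ (1 - (-1 : ℝ)) * x11 = 2) ∧
      ((-1 : ℝ) * x22 = 2 * x12 ∨ (1 - (-1 : ℝ)) * x22 = 2))) := by
  have hp0 : (p : ℕ) ≠ 0 := by omega
  have hpc : (p : ℂ) ≠ 0 := Nat.cast_ne_zero.mpr hp0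
  have hpr : (p : ℝ) ≠ 0 := Nat.cast_ne_zero.mpr hp0
  have hqne : q ≠ 0 := by rw [hq]; exact Complex.exp_ne_zero _
  -- (-1)^j * (-1)^j = 1
  have hm1 : ((-1 : ℂ) ^ j) * ((-1 : ℂ) ^ j) = 1 := by
    rw [← zpow_add₀ (by norm_num : (-1 : ℂ) ≠ 0)]
    have : j + j = 2 * j := by ring
    rw [this, zpow_mul]
    norm_num
  have hqq : q12 * q21 = q ^ (-2 : ℤ) := by
    rw [hq12, hq21]
    have : (-1 : ℂ) ^ j * q⁻¹ * ((-1 : ℂ) ^ j * q⁻¹)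
        = ((-1 : ℂ) ^ j * (-1 : ℂ) ^ j) * (q⁻¹ * q⁻¹) := by ring
    rw [this, hm1, one_mul, show (-2 : ℤ) = (-1) + (-1) from rfl,
      zpow_add₀ hqne, zpow_neg_one]
  have hq2 : q ^ 2 = Complex.exp (2 * (Real.pi : ℂ) * Complex.I / p) := by
    rw [hq, ← Complex.exp_nat_mul]
    ring_nf
  refine ⟨⟨?_, ?_, ?_⟩, ⟨?_, hqq, ?_⟩, ?_, ?_, ?_, ?_⟩
  · -- exp(πi x11) = q11
    rw [hq11, hq2, hx11]
    have key : (Real.pi : ℂ) * Complex.I * ((2 * ((j * p + 1 : ℤ) : ℝ) / p : ℝ) : ℂ)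
        = j * (2 * (Real.pi : ℂ) * Complex.I) + 2 * (Real.pi : ℂ) * Complex.I / p := by
      push_cast
      field_simp
    rw [key, Complex.exp_add, Complex.exp_int_mul_two_pi_mul_I, one_mul]
  · rw [hq22, hx22]
    simp [Complex.exp_pi_mul_I]
  · -- exp(2πi x12) = q12 q21 = q^(-2)
    rw [hqq, hx12]
    have key : 2 * (Real.pi : ℂ) * Complex.I * ((-(((j * p + 1 : ℤ) : ℝ)) / p : ℝ) : ℂ)
        = ((-j : ℤ) : ℂ) * (2 * (Real.pi : ℂ) * Complex.I) + (-(2 * (Real.pi : ℂ) * Complex.I / p)) := by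
      push_cast
      field_simp
      ring
    rw [key, Complex.exp_add, Complex.exp_int_mul_two_pi_mul_I, one_mul,
      Complex.exp_neg, ← hq2, zpow_neg]
    norm_num
  · rw [hqq, hq11, zpow_neg, ← zpow_natCast q 2]
    push_cast
    exact inv_mul_cancel₀ (zpow_ne_zero _ hqne)
  · rw [hqq]
    have hprim : IsPrimitiveRoot (q ^ 2) p := by
      rw [hq2]
      exact Complex.isPrimitiveRoot_exp p hp0
    have : q ^ (-2 : ℤ) = (q ^ 2)⁻¹ := by
      rw [zpow_neg, ← zpow_natCast q 2]; norm_num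
    rw [this]
    exact hprim.inv
  · rw [hx11, hx12]; field_simp
  · rw [hx22]; norm_num
  · left; rw [hx11, hx12]; field_simp
  · right; rw [hx22]; norm_num
end

section
/- Let p ≥ 3 be an integer, q := exp(iπ/p) ∈ ℂ (so q + q⁻¹ ≠ 0), and let ξ ∈ ℂ be nonzero. Let A be a unital associative ℂ-algebra and B, F ∈ A such that B² = 0 and ξ²·B F² − ξ(q + q⁻¹)·F B F + F²·B = 0. Then B F B F − ξ⁻²·F B F B = 0. -/
/-- the relation `F₁F₂F₁F₂ - ξ⁻²F₂F₁F₂F₁ = 0` in the asymmetric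
Nichols algebra follows from the fermionic relation and the Serre-type relation. -/
theorem asymm_nichols_BFBF_relation
    (p : ℕ) (hp : 3 ≤ p)
    (q : ℂ) (hq : q = Complex.exp ((Real.pi : ℂ) * Complex.I / p))
    (ξ : ℂ) (hξ : ξ ≠ 0)
    (A : Type*) [Ring A] [Algebra ℂ A] (B F : A)
    (hB : B ^ 2 = 0)
    (hSerre : ξ ^ 2 • (B * F ^ 2) - (ξ * (q + q⁻¹)) • (F * B * F) + F ^ 2 * B = 0) :
    q + q⁻¹ ≠ 0 ∧ B * F * B * F - (ξ⁻¹) ^ 2 • (F * B * F * B) = 0 := by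
  have hp0 : (0 : ℝ) < p := by positivity
  have ht : ((Real.pi : ℂ) * Complex.I / p) = ((Real.pi / p : ℝ) : ℂ) * Complex.I := by
    push_cast; ring
  have hqc : q + q⁻¹ = 2 * Complex.cos ((Real.pi / p : ℝ) : ℂ) := by
    rw [Complex.two_cos, hq, ht, ← Complex.exp_neg, neg_mul]
  have hcospos : 0 < Real.cos (Real.pi / p) := by
    apply Real.cos_pos_of_mem_Ioo
    constructor
    · have : (0:ℝ) < Real.pi / p := by positivity
      linarith [Real.pi_pos]
    · calc Real.pi / p ≤ Real.pi / 3 := by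
            apply div_le_div_of_nonneg_left Real.pi_pos.le (by norm_num)
            exact_mod_cast hp
          _ < Real.pi / 2 := by
            apply div_lt_div_of_pos_left Real.pi_pos <;> norm_num
  have hqne : q + q⁻¹ ≠ 0 := by
    rw [hqc, ← Complex.ofReal_cos]
    simp only [ne_eq, mul_eq_zero, not_or]
    constructor
    · norm_num
    · exact_mod_cast hcospos.ne'
  refine ⟨hqne, ?_⟩
  set c : ℂ := ξ * (q + q⁻¹) with hc
  have hcne : c ≠ 0 := mul_ne_zero hξ hqne
  -- multiply Serre relation on the left by B
  have h1 : B * F ^ 2 * B = c • (B * (F * B * F)) := by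
    have h := congrArg (fun x => B * x) hSerre
    simp only [mul_add, mul_sub, mul_smul_comm, mul_zero] at h
    rw [show B * (B * F ^ 2) = B ^ 2 * F ^ 2 by noncomm_ring, hB, zero_mul,
      smul_zero, zero_sub, neg_add_eq_zero] at h
    rw [mul_assoc]
    exact h.symm
  -- multiply Serre relation on the right by B
  have h2 : ξ ^ 2 • (B * F ^ 2 * B) = c • (F * B * F * B) := by
    have h := congrArg (fun x => x * B) hSerre
    simp only [add_mul, sub_mul, smul_mul_assoc, zero_mul] at h
    rw [show F ^ 2 * B * B = F ^ 2 * B ^ 2 by noncomm_ring, hB, mul_zero,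
      add_zero, sub_eq_zero] at h
    exact h
  rw [h1, smul_comm] at h2
  have h3 : ξ ^ 2 • (B * (F * B * F)) = F * B * F * B := by
    have := congrArg (fun x => c⁻¹ • x) h2
    simpa [inv_smul_smul₀ hcne] using this
  have h4 : B * (F * B * F) = (ξ ^ 2)⁻¹ • (F * B * F * B) := by
    rw [← h3, inv_smul_smul₀ (pow_ne_zero 2 hξ)]
  rw [show B * F * B * F = B * (F * B * F) by noncomm_ring, h4, inv_pow, sub_self]
end

section
/- Let p ≥ 2 be an integer, q := exp(iπ/p) ∈ ℂ, and let ξ ∈ ℂ be nonzero. Let V be the ℂ-vector space with basis v₁, v₂ and let Ψ : V⊗V → V⊗V be the ℂ-linear map determined by Ψ(v_i ⊗ v_j) = q_{ij}·v_j ⊗ v_i, where q₁₁ = −1, q₁₂ = ξ⁻¹q⁻¹, q₂₁ = ξq⁻¹, q₂₂ = q². On V⊗V⊗V set Ψ₁ := Ψ⊗id and Ψ₂ := id⊗Ψ. Then the element w := ξ²·v₁⊗v₂⊗v₂ − ξ(q + q⁻¹)·v₂⊗v₁⊗v₂ + v₂⊗v₂⊗v₁ satisfies both (id + Ψ₁ +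 Ψ₁∘Ψ₂)(w) = 0 and (id + Ψ₂ + Ψ₂∘Ψ₁)(w) = 0. -/
/-!
For a diagonal braiding `Ψ (vᵢ ⊗ vⱼ) = qᵢⱼ • (vⱼ ⊗ vᵢ)` each partial symmetrizer sends a basic tensor
`vᵢ ⊗ vⱼ ⊗ vₖ` to a sum of three permuted basic tensors with monomial coefficients in the `qᵢⱼ`.
The three words `v₁v₂v₂`, `v₂v₁v₂`, `v₂v₂v₁` are permuted among themselves, so on their span each
symmetrizer is a `3 × 3` matrix, and the coefficients `ξ², -ξ(q + q⁻¹), 1` of the dual Serre element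
lie in the kernel of both matrices; `q₁₁` never enters since `v₁` occurs only once.
-/

open TensorProduct LinearMap

namespace DiagonalBraiding

variable {R V : Type*} [CommSemiring R] [AddCommMonoid V] [Module R V]

/-- `Ψ₁ = Ψ ⊗ id` on `V ⊗ (V ⊗ V)`. -/
noncomputable def braid₁ (Ψ : V ⊗[R] V →ₗ[R] V ⊗[R] V) : V ⊗[R] (V ⊗[R] V) →ₗ[R] V ⊗[R] (V ⊗[R] V) :=
  (TensorProduct.assoc R V V V).toLinearMap ∘ₗ rTensor V Ψ ∘ₗ
    (TensorProduct.assoc R V V V).symm.toLinearMap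

noncomputable def partialSymmetrizer₁ (Ψ : V ⊗[R] V →ₗ[R] V ⊗[R] V) :
    V ⊗[R] (V ⊗[R] V) →ₗ[R] V ⊗[R] (V ⊗[R] V) :=
  LinearMap.id + braid₁ Ψ + braid₁ Ψ ∘ₗ lTensor V Ψ

noncomputable def partialSymmetrizer₂ (Ψ : V ⊗[R] V →ₗ[R] V ⊗[R] V) :
    V ⊗[R] (V ⊗[R] V) →ₗ[R] V ⊗[R] (V ⊗[R] V) :=
  LinearMap.id + lTensor V Ψ + lTensor V Ψ ∘ₗ braid₁ Ψ

variable {Ψ : V ⊗[R] V →ₗ[R] V ⊗[R] V}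

theorem braid₁_tmul {x y z : V} {a : R} (hxy : Ψ (x ⊗ₜ y) = a • (y ⊗ₜ x)) :
    braid₁ Ψ (x ⊗ₜ (y ⊗ₜ z)) = a • (y ⊗ₜ (x ⊗ₜ z)) := by
  simp [braid₁, hxy, smul_tmul']

theorem partialSymmetrizer₁_tmul {x y z : V} {a b c : R} (hxy : Ψ (x ⊗ₜ y) = a • (y ⊗ₜ x))
    (hyz : Ψ (y ⊗ₜ z) = b • (z ⊗ₜ y)) (hxz : Ψ (x ⊗ₜ z) = c • (z ⊗ₜ x)) :
    partialSymmetrizer₁ Ψ (x ⊗ₜ (y ⊗ₜ z)) =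
      x ⊗ₜ (y ⊗ₜ z) + a • (y ⊗ₜ (x ⊗ₜ z)) + (b * c) • (z ⊗ₜ (x ⊗ₜ y)) := by
  simp [partialSymmetrizer₁, hyz, braid₁_tmul hxy, braid₁_tmul hxz, mul_smul]

theorem partialSymmetrizer₂_tmul {x y z : V} {a b c : R} (hxy : Ψ (x ⊗ₜ y) = a • (y ⊗ₜ x))
    (hyz : Ψ (y ⊗ₜ z) = b • (z ⊗ₜ y)) (hxz : Ψ (x ⊗ₜ z) = c • (z ⊗ₜ x)) :
    partialSymmetrizer₂ Ψ (x ⊗ₜ (y ⊗ₜ z)) =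
      x ⊗ₜ (y ⊗ₜ z) + b • (x ⊗ₜ (z ⊗ₜ y)) + (a * c) • (y ⊗ₜ (z ⊗ₜ x)) := by
  simp [partialSymmetrizer₂, hyz, hxz, braid₁_tmul hxy, mul_smul]

variable {x y : V} {a b d : R}

theorem partialSymmetrizer₁_xyy_yxy_yyx (hxy : Ψ (x ⊗ₜ y) = a • (y ⊗ₜ x))
    (hyx : Ψ (y ⊗ₜ x) = b • (x ⊗ₜ y)) (hyy : Ψ (y ⊗ₜ y) = d • (y ⊗ₜ y)) (α β γ : R) :
    partialSymmetrizer₁ Ψ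
        (α • (x ⊗ₜ (y ⊗ₜ y)) + β • (y ⊗ₜ (x ⊗ₜ y)) + γ • (y ⊗ₜ (y ⊗ₜ x))) =
      (α + β * b + γ * b ^ 2) • (x ⊗ₜ (y ⊗ₜ y)) + (α * (a * (1 + d)) + β) • (y ⊗ₜ (x ⊗ₜ y)) +
        (β * (a * d) + γ * (1 + d)) • (y ⊗ₜ (y ⊗ₜ x)) := by
  simp only [map_add, map_smul, partialSymmetrizer₁_tmul hxy hyy hxy,
    partialSymmetrizer₁_tmul hyx hxy hyy, partialSymmetrizer₁_tmul hyy hyx hyx]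
  match_scalars <;> ring

theorem partialSymmetrizer₂_xyy_yxy_yyx (hxy : Ψ (x ⊗ₜ y) = a • (y ⊗ₜ x))
    (hyx : Ψ (y ⊗ₜ x) = b • (x ⊗ₜ y)) (hyy : Ψ (y ⊗ₜ y) = d • (y ⊗ₜ y)) (α β γ : R) :
    partialSymmetrizer₂ Ψ
        (α • (x ⊗ₜ (y ⊗ₜ y)) + β • (y ⊗ₜ (x ⊗ₜ y)) + γ • (y ⊗ₜ (y ⊗ₜ x))) =
      (α * (1 + d) + β * (b * d)) • (x ⊗ₜ (y ⊗ₜ y)) + (β + γ * (b * (1 + d))) • (y ⊗ₜ (x ⊗ₜ y)) +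
        (α * a ^ 2 + β * a + γ) • (y ⊗ₜ (y ⊗ₜ x)) := by
  simp only [map_add, map_smul, partialSymmetrizer₂_tmul hxy hyy hxy,
    partialSymmetrizer₂_tmul hyx hxy hyy, partialSymmetrizer₂_tmul hyy hyx hyx]
  match_scalars <;> ring

end DiagonalBraiding

open DiagonalBraiding

theorem dual_serre_element_killed_by_partial_symmetrizers_general
    (p : ℕ)
    (q : ℂ) (hq : q = Complex.exp ((Real.pi : ℂ) * Complex.I / p))
    (ξ : ℂ) (hξ : ξ ≠ 0)
    (V : Type*) [AddCommGroup V] [Module ℂ V] (v : Module.Basis (Fin 2) ℂ V)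
    (Ψ : V ⊗[ℂ] V →ₗ[ℂ] V ⊗[ℂ] V)
    (hΨ01 : Ψ (v 0 ⊗ₜ[ℂ] v 1) = (ξ⁻¹ * q⁻¹) • (v 1 ⊗ₜ[ℂ] v 0))
    (hΨ10 : Ψ (v 1 ⊗ₜ[ℂ] v 0) = (ξ * q⁻¹) • (v 0 ⊗ₜ[ℂ] v 1))
    (hΨ11 : Ψ (v 1 ⊗ₜ[ℂ] v 1) = q ^ 2 • (v 1 ⊗ₜ[ℂ] v 1))
    (Ψ₁ Ψ₂ : V ⊗[ℂ] (V ⊗[ℂ] V) →ₗ[ℂ] V ⊗[ℂ] (V ⊗[ℂ] V))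
    (hΨ₁ : Ψ₁ = (TensorProduct.assoc ℂ V V V).toLinearMap ∘ₗ
      LinearMap.rTensor V Ψ ∘ₗ (TensorProduct.assoc ℂ V V V).symm.toLinearMap)
    (hΨ₂ : Ψ₂ = LinearMap.lTensor V Ψ)
    (w : V ⊗[ℂ] (V ⊗[ℂ] V))
    (hw : w = ξ ^ 2 • (v 0 ⊗ₜ[ℂ] (v 1 ⊗ₜ[ℂ] v 1))
      - (ξ * (q + q⁻¹)) • (v 1 ⊗ₜ[ℂ] (v 0 ⊗ₜ[ℂ] v 1))
      + v 1 ⊗ₜ[ℂ] (v 1 ⊗ₜ[ℂ] v 0)) :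
    ((LinearMap.id : V ⊗[ℂ] (V ⊗[ℂ] V) →ₗ[ℂ] V ⊗[ℂ] (V ⊗[ℂ] V)) + Ψ₁ + Ψ₁ ∘ₗ Ψ₂) w = 0 ∧
    ((LinearMap.id : V ⊗[ℂ] (V ⊗[ℂ] V) →ₗ[ℂ] V ⊗[ℂ] (V ⊗[ℂ] V)) + Ψ₂ + Ψ₂ ∘ₗ Ψ₁) w = 0 := by
  have hq0 : q ≠ 0 := hq ▸ Complex.exp_ne_zero _
  have hw' : w = ξ ^ 2 • (v 0 ⊗ₜ[ℂ] (v 1 ⊗ₜ[ℂ] v 1))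
      + (-(ξ * (q + q⁻¹))) • (v 1 ⊗ₜ[ℂ] (v 0 ⊗ₜ[ℂ] v 1)) + (1 : ℂ) • (v 1 ⊗ₜ[ℂ] (v 1 ⊗ₜ[ℂ] v 0)) := by
    rw [hw, neg_smul, one_smul, sub_eq_add_neg]
  subst hΨ₁ hΨ₂ hw'
  constructor
  · change partialSymmetrizer₁ Ψ _ = 0
    rw [partialSymmetrizer₁_xyy_yxy_yyx hΨ01 hΨ10 hΨ11]
    have h₁ : ξ ^ 2 + -(ξ * (q + q⁻¹)) * (ξ * q⁻¹) + 1 * (ξ * q⁻¹) ^ 2 = 0 := by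
      field_simp; ring
    have h₂ : ξ ^ 2 * (ξ⁻¹ * q⁻¹ * (1 + q ^ 2)) + -(ξ * (q + q⁻¹)) = 0 := by
      field_simp; ring
    have h₃ : -(ξ * (q + q⁻¹)) * (ξ⁻¹ * q⁻¹ * q ^ 2) + 1 * (1 + q ^ 2) = 0 := by
      field_simp; ring
    rw [h₁, h₂, h₃]; simp
  · change partialSymmetrizer₂ Ψ _ = 0
    rw [partialSymmetrizer₂_xyy_yxy_yyx hΨ01 hΨ10 hΨ11]
    have h₁ : ξ ^ 2 * (1 + q ^ 2) + -(ξ * (q + q⁻¹)) * (ξ * q⁻¹ * q ^ 2) = 0 := by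
      field_simp; ring
    have h₂ : -(ξ * (q + q⁻¹)) + 1 * (ξ * q⁻¹ * (1 + q ^ 2)) = 0 := by
      field_simp; ring
    have h₃ : ξ ^ 2 * (ξ⁻¹ * q⁻¹) ^ 2 + -(ξ * (q + q⁻¹)) * (ξ⁻¹ * q⁻¹) + 1 = 0 := by
      field_simp; ring
    rw [h₁, h₂, h₃]; simp

/-- the dual Serre element is annihilated by both partial braided
symmetrizers `id + Ψ₁ + Ψ₁Ψ₂` and `id + Ψ₂ + Ψ₂Ψ₁` for the asymmetric diagonal
braiding. -/
theorem dual_serre_element_killed_by_partial_symmetrizers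
    (p : ℕ) (hp : 2 ≤ p)
    (q : ℂ) (hq : q = Complex.exp ((Real.pi : ℂ) * Complex.I / p))
    (ξ : ℂ) (hξ : ξ ≠ 0)
    (V : Type*) [AddCommGroup V] [Module ℂ V] (v : Module.Basis (Fin 2) ℂ V)
    (Ψ : V ⊗[ℂ] V →ₗ[ℂ] V ⊗[ℂ] V)
    (hΨ00 : Ψ (v 0 ⊗ₜ[ℂ] v 0) = (-1 : ℂ) • (v 0 ⊗ₜ[ℂ] v 0))
    (hΨ01 : Ψ (v 0 ⊗ₜ[ℂ] v 1) = (ξ⁻¹ * q⁻¹) • (v 1 ⊗ₜ[ℂ] v 0))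
    (hΨ10 : Ψ (v 1 ⊗ₜ[ℂ] v 0) = (ξ * q⁻¹) • (v 0 ⊗ₜ[ℂ] v 1))
    (hΨ11 : Ψ (v 1 ⊗ₜ[ℂ] v 1) = q ^ 2 • (v 1 ⊗ₜ[ℂ] v 1))
    (Ψ₁ Ψ₂ : V ⊗[ℂ] (V ⊗[ℂ] V) →ₗ[ℂ] V ⊗[ℂ] (V ⊗[ℂ] V))
    (hΨ₁ : Ψ₁ = (TensorProduct.assoc ℂ V V V).toLinearMap ∘ₗ
      LinearMap.rTensor V Ψ ∘ₗ (TensorProduct.assoc ℂ V V V).symm.toLinearMap)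
    (hΨ₂ : Ψ₂ = LinearMap.lTensor V Ψ)
    (w : V ⊗[ℂ] (V ⊗[ℂ] V))
    (hw : w = ξ ^ 2 • (v 0 ⊗ₜ[ℂ] (v 1 ⊗ₜ[ℂ] v 1))
      - (ξ * (q + q⁻¹)) • (v 1 ⊗ₜ[ℂ] (v 0 ⊗ₜ[ℂ] v 1))
      + v 1 ⊗ₜ[ℂ] (v 1 ⊗ₜ[ℂ] v 0)) :
    ((LinearMap.id : V ⊗[ℂ] (V ⊗[ℂ] V) →ₗ[ℂ] V ⊗[ℂ] (V ⊗[ℂ] V)) + Ψ₁ + Ψ₁ ∘ₗ Ψ₂) w = 0 ∧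
    ((LinearMap.id : V ⊗[ℂ] (V ⊗[ℂ] V) →ₗ[ℂ] V ⊗[ℂ] (V ⊗[ℂ] V)) + Ψ₂ + Ψ₂ ∘ₗ Ψ₁) w = 0 :=
  dual_serre_element_killed_by_partial_symmetrizers_general p q hq ξ hξ V v Ψ hΨ01 hΨ10 hΨ11 Ψ₁ Ψ₂
    hΨ₁ hΨ₂ w hw
end
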